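/- arXiv:2402.18250 — 2 statements merged into one kernel-verified Lean document; each statement's English description precedes it below -/
import Mathlib

section
/- Let κ be an infinite cardinal and F ⊆ 2^κ with sdim(F) < cf(κ). Then the topological closure of F in 2^κ (with the bounded-support product topology, whose basic open sets are [t] = {x ∈ 2^κ : t ⊆ x} for t : α → 2 with α < κ) has the same string dimension as F: sdim(cl(F)) = sdim(F). -/
/-!
A set of size `sdim F < cf(κ)` is bounded in `κ`, and on a bounded set every element of the
closure agrees with some element of `F`. Hence the closure cannot shatter a set of size
`sdim F` either, while `F ⊆ cl(F)` gives the other inequality.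
-/

universe u

open Cardinal

/-- `F` shatters `A` if every function `A → Bool` extends to an element of `F`. -/
def Shatters {X : Type u} (F : Set (X → Bool)) (A : Set X) : Prop :=
  ∀ g : X → Bool, ∃ f ∈ F, ∀ a ∈ A, f a = g a

/-- The string dimension of `F`: the least cardinal `δ` such that `F` shatters no
set of cardinality `δ`. -/
noncomputable def sdim {X : Type u} (F : Set (X → Bool)) : Cardinal.{u} :=
  sInf {δ : Cardinal.{u} | ∀ A : Set X, #A = δ → ¬ Shatters F A}

/-- The closure of `F ⊆ 2^κ` in the bounded-support product topology: those `x` which,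
for every proper initial segment, agree with some element of `F` on that segment.
(Here `2^κ` is realised as functions on the canonical well-order of type `κ`, so
initial segments determined by ordinals `α < κ` are exactly the sets `{b | b ≤ a}`,
`κ` being a limit ordinal.) -/
def clb {K : Type u} [LinearOrder K] (F : Set (K → Bool)) : Set (K → Bool) :=
  {x | ∀ a : K, ∃ y ∈ F, ∀ b ≤ a, x b = y b}

theorem Shatters.mono_left {X : Type u} {F G : Set (X → Bool)} {A : Set X} (hFG : F ⊆ G)
    (hF : Shatters F A) : Shatters G A := fun g =>
  let ⟨f, hf, hfg⟩ := hF g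
  ⟨f, hFG hf, hfg⟩

theorem BddAbove.of_mk_lt_cof {α : Type u} [LinearOrder α] {s : Set α}
    (hs : #s < Order.cof α) : BddAbove s :=
  .of_not_isCofinal fun hcof => (Order.cof_le hcof).not_gt hs

section sdim

variable {X : Type u} {F G : Set (X → Bool)}

theorem sdim_set_nonempty (F : Set (X → Bool)) :
    {δ : Cardinal.{u} | ∀ A : Set X, #A = δ → ¬ Shatters F A}.Nonempty :=
  ⟨Order.succ #X, fun A hA _ => (Order.lt_succ #X).not_ge (hA ▸ mk_set_le A)⟩

theorem not_shatters_of_mk_eq_sdim {A : Set X} (hA : #A = sdim F) : ¬ Shatters F A :=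
  csInf_mem (sdim_set_nonempty F) A hA

theorem sdim_le_of_forall_not_shatters {δ : Cardinal.{u}}
    (h : ∀ A : Set X, #A = δ → ¬ Shatters F A) : sdim F ≤ δ :=
  csInf_le (OrderBot.bddBelow _) h

theorem sdim_mono (hFG : F ⊆ G) : sdim F ≤ sdim G :=
  csInf_le_csInf (OrderBot.bddBelow _) (sdim_set_nonempty G)
    fun _ hδ A hA hF => hδ A hA (hF.mono_left hFG)

end sdim

section clb

variable {K : Type u} [LinearOrder K] {F : Set (K → Bool)}

theorem subset_clb (F : Set (K → Bool)) : F ⊆ clb F :=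
  fun f hf _ => ⟨f, hf, fun _ _ => rfl⟩

theorem Shatters.of_clb_of_bddAbove {A : Set K} (hA : BddAbove A) (h : Shatters (clb F) A) :
    Shatters F A := fun g => by
  obtain ⟨a, ha⟩ := hA
  obtain ⟨x, hx, hxg⟩ := h g
  obtain ⟨y, hy, hxy⟩ := hx a
  exact ⟨y, hy, fun b hb => (hxy b (ha hb)).symm.trans (hxg b hb)⟩

theorem sdim_clb_eq_of_sdim_lt_cof (h : sdim F < Order.cof K) : sdim (clb F) = sdim F := by
  refine le_antisymm (sdim_le_of_forall_not_shatters fun A hA hsh => ?_) (sdim_mono (subset_clb F))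
  have hbdd : BddAbove A := .of_mk_lt_cof (hA ▸ h)
  exact not_shatters_of_mk_eq_sdim hA (hsh.of_clb_of_bddAbove hbdd)

end clb

theorem stmt2_general (κ : Cardinal.{u})
    (F : Set ((Cardinal.ord κ).ToType → Bool))
    (h : sdim F < (Cardinal.ord κ).cof) :
    sdim (clb F) = sdim F :=
  sdim_clb_eq_of_sdim_lt_cof (by rwa [Ordinal.cof_toType])

/-- If `sdim F < cf(κ)` then the closure of `F` in the bounded-support product topology
on `2^κ` has the same string dimension as `F`. -/
theorem stmt2 (κ : Cardinal.{u}) (hκ : ℵ₀ ≤ κ)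
    (F : Set ((Cardinal.ord κ).ToType → Bool))
    (h : sdim F < (Cardinal.ord κ).cof) :
    sdim (clb F) = sdim F :=
  stmt2_general κ F h
end

section
/- For every infinite cardinal κ, 𝔰𝔡(κ⁺,κ) ≥ κ⁺. That is, if {F_α : α < λ} is a family of subsets of 2^κ with λ ≤ κ whose union is 2^κ, then some F_α shatters a subset of κ of cardinality κ. -/
/-!
Split `κ` into `κ` pairwise disjoint pieces of size `κ`, one for each family of the cover. If
no family shattered its piece, each family would miss some pattern on its piece; gluing these
patterns gives a single function outside every family, contradicting that they cover `2^κ`.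
Hence at most `κ` families of string dimension `≤ κ` never cover `2^κ`.
-/

universe u

open Cardinal

/-- `𝔰𝔡(δ,κ)`: the least cardinality of a family of subsets of `2^κ`, each of string
dimension `< δ`, whose union is all of `2^κ`. -/
noncomputable def StringCov (δ κ : Cardinal.{u}) : Cardinal.{u} :=
  sInf {c : Cardinal.{u} | ∃ 𝒜 : Set (Set (Quotient.out κ → Bool)),
    #𝒜 = c ∧ (∀ F ∈ 𝒜, sdim F < δ) ∧ ⋃₀ 𝒜 = Set.univ}

open Function

variable {X : Type u}

theorem Shatters.mono {F : Set (X → Bool)} {A B : Set X} (h : Shatters F A) (hBA : B ⊆ A) :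
    Shatters F B := fun g =>
  let ⟨f, hf, hfg⟩ := h g
  ⟨f, hf, fun a ha => hfg a (hBA ha)⟩

theorem iUnion_ne_univ_of_not_shatters {ι : Type*} {F : ι → Set (X → Bool)} {A : ι → Set X}
    (hA : Pairwise (Disjoint on A)) (hF : ∀ i, ¬ Shatters (F i) (A i)) :
    (⋃ i, F i) ≠ Set.univ := by
  classical
  have hmiss : ∀ i, ∃ g : X → Bool, ∀ f ∈ F i, ∃ a ∈ A i, f a ≠ g a := by
    simpa only [Shatters, not_forall, not_exists, not_and, exists_prop] using hF
  choose g hg using hmiss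
  let G : X → Bool := fun x => if h : ∃ i, x ∈ A i then g h.choose x else false
  have hG : ∀ i, ∀ a ∈ A i, G a = g i a := by
    intro i a ha
    have h : ∃ j, a ∈ A j := ⟨i, ha⟩
    have hi : h.choose = i := by
      by_contra hne
      exact Set.disjoint_left.mp (hA hne) h.choose_spec ha
    simp only [G, dif_pos h, hi]
  intro hcov
  obtain ⟨i, hi⟩ := Set.mem_iUnion.mp (hcov ▸ Set.mem_univ G)
  obtain ⟨a, ha, hne⟩ := hg i G hi
  exact hne (hG i a ha)

theorem exists_pairwise_disjoint_mk_eq {ι : Type u} (hX : ℵ₀ ≤ #X) (hι : #ι ≤ #X) :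
    ∃ A : ι → Set X, Pairwise (Disjoint on A) ∧ ∀ i, #(A i) = #X := by
  have hle : #(ι × X) ≤ #X := by
    rw [mk_prod, lift_id, lift_id]
    calc #ι * #X ≤ #X * #X := mul_le_mul_left hι _
      _ = #X := mul_eq_self hX
  obtain ⟨e⟩ := hle
  have hslice : ∀ i, Injective fun x => e (i, x) := fun i x y hxy =>
    (Prod.mk.inj (e.injective hxy)).2
  refine ⟨fun i => Set.range fun x => e (i, x), ?_, fun i => mk_range_eq _ (hslice i)⟩
  intro i j hij
  refine Set.disjoint_left.mpr ?_
  rintro _ ⟨x, rfl⟩ ⟨y, hyx⟩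
  exact hij (Prod.mk.inj (e.injective hyx)).1.symm

theorem exists_shatters_of_iUnion_eq_univ {ι : Type u} (hX : ℵ₀ ≤ #X) (hι : #ι ≤ #X)
    {F : ι → Set (X → Bool)} (hF : (⋃ i, F i) = Set.univ) :
    ∃ i, ∃ A : Set X, #A = #X ∧ Shatters (F i) A := by
  obtain ⟨A, hdisj, hcard⟩ := exists_pairwise_disjoint_mk_eq hX hι
  by_contra! hnone
  exact iUnion_ne_univ_of_not_shatters hdisj (fun i => hnone i (A i) (hcard i)) hF

theorem Shatters.mk_lt_sdim {F : Set (X → Bool)} {A : Set X} (h : Shatters F A) :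
    #A < sdim F := by
  have hmem : sdim F ∈ {δ : Cardinal.{u} | ∀ B : Set X, #B = δ → ¬ Shatters F B} := by
    refine csInf_mem ⟨Order.succ #X, fun B hB _ => ?_⟩
    exact (Order.lt_succ #X).not_ge (hB ▸ mk_set_le B)
  by_contra! hle
  obtain ⟨B, hBA, hB⟩ := le_mk_iff_exists_subset.mp hle
  exact hmem B hB (h.mono hBA)

theorem sdim_singleton_le_one (f : X → Bool) : sdim ({f} : Set (X → Bool)) ≤ 1 := by
  refine csInf_le' fun A hA hsh => ?_
  obtain ⟨a⟩ := mk_ne_zero_iff.mp (hA ▸ one_ne_zero)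
  obtain ⟨f', rfl, hf'⟩ := hsh fun _ => !f a.1
  simpa using hf' a a.2

theorem succ_le_stringCov_succ {κ : Cardinal.{u}} (hκ : ℵ₀ ≤ κ) :
    Order.succ κ ≤ StringCov (Order.succ κ) κ := by
  refine le_csInf ⟨_, Set.range fun f => {f}, rfl, ?_, ?_⟩ ?_
  · rintro _ ⟨f, rfl⟩
    exact (sdim_singleton_le_one f).trans_lt
      ((one_lt_aleph0.trans_le hκ).trans (Order.lt_succ κ))
  · exact Set.eq_univ_of_forall fun f => ⟨{f}, ⟨f, rfl⟩, rfl⟩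
  · rintro _ ⟨𝒜, rfl, hsdim, hcov⟩
    rw [Order.succ_le_iff]
    by_contra! h𝒜
    obtain ⟨F, A, hA, hsh⟩ := exists_shatters_of_iUnion_eq_univ (X := Quotient.out κ)
      (ι := 𝒜) (F := Subtype.val) (by rwa [mk_out]) (by rwa [mk_out])
      (by rwa [← Set.sUnion_eq_iUnion])
    have hlt := hsh.mk_lt_sdim
    rw [hA, mk_out] at hlt
    exact (Order.lt_succ_iff.mp (hsdim F F.2)).not_gt hlt

/-- `𝔰𝔡(κ⁺,κ) ≥ κ⁺`: whenever `2^κ` is covered by at most `κ` many families, one of the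
families shatters a subset of `κ` of cardinality `κ`. -/
theorem stmt10 (κ : Cardinal.{u}) (hκ : ℵ₀ ≤ κ) :
    Order.succ κ ≤ StringCov (Order.succ κ) κ ∧
    ∀ (ι : Type u), #ι ≤ κ → ∀ Fam : ι → Set (Quotient.out κ → Bool),
      (⋃ i, Fam i) = Set.univ →
      ∃ i, ∃ A : Set (Quotient.out κ), #A = κ ∧ Shatters (Fam i) A := by
  refine ⟨succ_le_stringCov_succ hκ, fun ι hι Fam hcov => ?_⟩
  simpa only [mk_out] using
    exists_shatters_of_iUnion_eq_univ (by rwa [mk_out]) (by rwa [mk_out]) hcov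
end
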